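/- Let n ≥ 1, let s_1,…,s_n ∈ ℝ, let ρ_0 ∈ (−1,1) and ρ̂_1,…,ρ̂_n ∈ (−1,1). Set A = (1/n)Σ_{i=1}^n s_i √(1+ρ̂_i) and D = (1/n)Σ_{i=1}^n s_i √(1−ρ̂_i), and assume A > 0 and D > 0. Let S⁰ = Σ(ρ_0), and let G = (1/n)Σ_{i=1}^n s_i T_{S⁰}^{Σ(ρ̂_i)}. Then G S⁰ G = ((A² + D²)/2) · Σ(ρ*) with ρ* = (A² − D²)/(A² + D²); consequently, normalizing Σ¹ := G S⁰ G by its (constant, positive) diagonal, D(Σ¹)^{−1/2} Σ¹ D(Σ¹)^{−1/2} = Σ(ρ*). -/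

import Mathlib

open Matrix Real

/-- The positive semidefinite square root of a positive semidefinite real matrix
(junk value `0` on matrices that are not positive semidefinite). -/
noncomputable def msqrt {d : ℕ} (A : Matrix (Fin d) (Fin d) ℝ) : Matrix (Fin d) (Fin d) ℝ :=
  open scoped Classical in
  if h : A.PosSemidef then
    (h.1.eigenvectorUnitary : Matrix (Fin d) (Fin d) ℝ) *
      Matrix.diagonal (Real.sqrt ∘ h.1.eigenvalues) *
      (star h.1.eigenvectorUnitary : Matrix (Fin d) (Fin d) ℝ)
  else 0

/-- The squared Bures–Wasserstein distance
`B²(S,Q) = tr S + tr Q − 2 tr((S^{1/2} Q S^{1/2})^{1/2})`. -/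
noncomputable def sqB {d : ℕ} (S Q : Matrix (Fin d) (Fin d) ℝ) : ℝ :=
  S.trace + Q.trace - 2 * (msqrt (msqrt S * Q * msqrt S)).trace

/-- The Bures–Wasserstein distance `B(S,Q)`. -/
noncomputable def bw {d : ℕ} (S Q : Matrix (Fin d) (Fin d) ℝ) : ℝ :=
  Real.sqrt (sqB S Q)

/-- The Frobenius (Hilbert–Schmidt) norm of a matrix. -/
noncomputable def frobNorm {d : ℕ} (A : Matrix (Fin d) (Fin d) ℝ) : ℝ :=
  Real.sqrt (∑ i, ∑ j, (A i j) ^ 2)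

/-- The spectral (`ℓ²`-operator) norm of a matrix. -/
noncomputable def opNorm {d : ℕ} (A : Matrix (Fin d) (Fin d) ℝ) : ℝ :=
  ‖Matrix.toEuclideanCLM (𝕜 := ℝ) A‖

/-- A correlation matrix: real symmetric positive semidefinite with unit diagonal. -/
def IsCorrMat {d : ℕ} (A : Matrix (Fin d) (Fin d) ℝ) : Prop :=
  A.PosSemidef ∧ ∀ i, A i i = 1

/-- The 2×2 correlation matrix with off-diagonal entry `ρ`. -/
def corr2 (ρ : ℝ) : Matrix (Fin 2) (Fin 2) ℝ := !![1, ρ; ρ, 1]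

/-- The Gaussian optimal transport matrix `T_Σ^Q = Σ^{-1/2} (Σ^{1/2} Q Σ^{1/2})^{1/2} Σ^{-1/2}`. -/
noncomputable def otMap {d : ℕ} (S Q : Matrix (Fin d) (Fin d) ℝ) : Matrix (Fin d) (Fin d) ℝ :=
  (msqrt S)⁻¹ * msqrt (msqrt S * Q * msqrt S) * (msqrt S)⁻¹

/-- Symmetric normalization `D(Σ)^{-1/2} Σ D(Σ)^{-1/2}` of a matrix by its diagonal. -/
noncomputable def symNormalize {d : ℕ} (S : Matrix (Fin d) (Fin d) ℝ) :
    Matrix (Fin d) (Fin d) ℝ :=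
  Matrix.diagonal (fun i => (Real.sqrt (S i i))⁻¹) * S *
    Matrix.diagonal (fun i => (Real.sqrt (S i i))⁻¹)

/-- The symmetric 2×2 matrix with eigenvalue `p` on `(1,1)` and `q` on `(1,-1)`. -/
noncomputable def eigMat (p q : ℝ) : Matrix (Fin 2) (Fin 2) ℝ :=
  !![(p+q)/2, (p-q)/2; (p-q)/2, (p+q)/2]

lemma eigMat_mul (p q r s : ℝ) : eigMat p q * eigMat r s = eigMat (p*r) (q*s) := by
  ext i j
  fin_cases i <;> fin_cases j <;>
    simp [eigMat, Matrix.mul_apply, Fin.sum_univ_two] <;> ring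

lemma eigMat_one : eigMat 1 1 = 1 := by
  ext i j; fin_cases i <;> fin_cases j <;> simp [eigMat, Matrix.one_apply]

lemma corr2_eq (ρ : ℝ) : corr2 ρ = eigMat (1+ρ) (1-ρ) := by
  ext i j; fin_cases i <;> fin_cases j <;> simp [eigMat, corr2] <;> ring_nf

lemma eigMat_smul (c p q : ℝ) : c • eigMat p q = eigMat (c*p) (c*q) := by
  ext i j; fin_cases i <;> fin_cases j <;> simp [eigMat] <;> ring

lemma eigMat_posSemidef {p q : ℝ} (hp : 0 ≤ p) (hq : 0 ≤ q) : (eigMat p q).PosSemidef := by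
  rw [Matrix.posSemidef_iff_dotProduct_mulVec]
  constructor
  · ext i j; fin_cases i <;> fin_cases j <;> simp [eigMat]
  · intro x
    have : dotProduct (star x) (eigMat p q *ᵥ x)
        = (p/2) * (x 0 + x 1)^2 + (q/2) * (x 0 - x 1)^2 := by
      simp [dotProduct, eigMat, mulVec, Fin.sum_univ_two]
      ring
    rw [this]
    positivity

open scoped MatrixOrder in
lemma msqrt_eigMat {p q : ℝ} (hp : 0 ≤ p) (hq : 0 ≤ q) :
    msqrt (eigMat p q) = eigMat (Real.sqrt p) (Real.sqrt q) := by
  have h := eigMat_posSemidef hp hq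
  have hc : msqrt (eigMat p q) = CFC.sqrt (eigMat p q) := by
    rw [msqrt, dif_pos h, CFC.sqrt_eq_cfc, cfc_nnreal_eq_real _ _, h.1.cfc_eq,
      IsHermitian.cfc]
    simp [Function.comp_def, h.eigenvalues_nonneg]
  rw [hc, CFC.sqrt_eq_iff _ _ h.nonneg
    (eigMat_posSemidef (Real.sqrt_nonneg p) (Real.sqrt_nonneg q)).nonneg]
  rw [eigMat_mul, Real.mul_self_sqrt hp, Real.mul_self_sqrt hq]

lemma eigMat_inv {p q : ℝ} (hp : p ≠ 0) (hq : q ≠ 0) : (eigMat p q)⁻¹ = eigMat p⁻¹ q⁻¹ := by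
  apply inv_eq_right_inv
  rw [eigMat_mul, mul_inv_cancel₀ hp, mul_inv_cancel₀ hq, eigMat_one]

lemma otMap_corr2 {ρ0 ρ1 : ℝ} (h0 : ρ0 ∈ Set.Ioo (-1:ℝ) 1) (h1 : ρ1 ∈ Set.Ioo (-1:ℝ) 1) :
    otMap (corr2 ρ0) (corr2 ρ1)
      = eigMat (Real.sqrt (1+ρ1) / Real.sqrt (1+ρ0)) (Real.sqrt (1-ρ1) / Real.sqrt (1-ρ0)) := by
  obtain ⟨h0l, h0r⟩ := h0
  obtain ⟨h1l, h1r⟩ := h1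
  have hp0 : (0:ℝ) < 1 + ρ0 := by linarith
  have hq0 : (0:ℝ) < 1 - ρ0 := by linarith
  have hp1 : (0:ℝ) ≤ 1 + ρ1 := by linarith
  have hq1 : (0:ℝ) ≤ 1 - ρ1 := by linarith
  have hsp0 : (0:ℝ) < Real.sqrt (1+ρ0) := Real.sqrt_pos.mpr hp0
  have hsq0 : (0:ℝ) < Real.sqrt (1-ρ0) := Real.sqrt_pos.mpr hq0
  have e1 : Real.sqrt (1+ρ0) * (1+ρ1) * Real.sqrt (1+ρ0)
      = (Real.sqrt (1+ρ0) * Real.sqrt (1+ρ1))^2 := by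
    rw [mul_pow, Real.sq_sqrt hp0.le, Real.sq_sqrt hp1,
      mul_comm (Real.sqrt (1+ρ0)) (1+ρ1), mul_assoc, Real.mul_self_sqrt hp0.le]
    ring
  have e2 : Real.sqrt (1-ρ0) * (1-ρ1) * Real.sqrt (1-ρ0)
      = (Real.sqrt (1-ρ0) * Real.sqrt (1-ρ1))^2 := by
    rw [mul_pow, Real.sq_sqrt hq0.le, Real.sq_sqrt hq1,
      mul_comm (Real.sqrt (1-ρ0)) (1-ρ1), mul_assoc, Real.mul_self_sqrt hq0.le]
    ring
  rw [otMap, corr2_eq, corr2_eq, msqrt_eigMat hp0.le hq0.le, eigMat_mul, eigMat_mul,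
    msqrt_eigMat (by positivity) (by positivity),
    eigMat_inv hsp0.ne' hsq0.ne', eigMat_mul, eigMat_mul, e1, e2,
    Real.sqrt_sq (by positivity), Real.sqrt_sq (by positivity)]
  congr 1 <;> field_simp <;> ring

lemma eigMat_decomp (p q : ℝ) : eigMat p q = p • eigMat 1 0 + q • eigMat 0 1 := by
  ext i j; fin_cases i <;> fin_cases j <;> norm_num [eigMat] <;> ring

lemma eigMat_sum {n : ℕ} (c : Fin n → ℝ) (p q : Fin n → ℝ) :
    ∑ i, c i • eigMat (p i) (q i) = eigMat (∑ i, c i * p i) (∑ i, c i * q i) := by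
  have h : ∀ i : Fin n, c i • eigMat (p i) (q i)
      = (c i * p i) • eigMat 1 0 + (c i * q i) • eigMat 0 1 := by
    intro i
    rw [eigMat_decomp (p i) (q i), smul_add, smul_smul, smul_smul]
  rw [Finset.sum_congr rfl fun i _ => h i, Finset.sum_add_distrib,
    ← Finset.sum_smul, ← Finset.sum_smul, ← eigMat_decomp]

lemma symNormalize_eigMat {p q : ℝ} (h : 0 < p + q) :
    symNormalize (eigMat p q) = corr2 ((p - q)/(p + q)) := by
  have hc : (0:ℝ) < (p+q)/2 := by linarith
  set r := Real.sqrt ((p+q)/2) with hrd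
  have hr : r * r = (p+q)/2 := Real.mul_self_sqrt hc.le
  have hrpos : (0:ℝ) < r := Real.sqrt_pos.mpr hc
  have hd : ∀ i : Fin 2, eigMat p q i i = (p+q)/2 := by
    intro i; fin_cases i <;> simp [eigMat]
  have hs : ∀ i : Fin 2, Real.sqrt (eigMat p q i i) = r := fun i => by rw [hd i, hrd]
  ext i j
  simp only [symNormalize, Matrix.mul_diagonal, Matrix.diagonal_mul, hs]
  fin_cases i <;> fin_cases j <;>
    · simp only [eigMat, corr2, Matrix.cons_val', Matrix.cons_val_zero, Matrix.cons_val_one,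
        Matrix.head_cons, Matrix.empty_val', Matrix.cons_val_fin_one, Matrix.head_fin_const,
        Matrix.of_apply]
      have h2 : p + q = 2 * (r * r) := by linarith
      rw [h2]
      field_simp
      simp <;> field_simp

/-- With `S⁰ = Σ(ρ₀)` (`ρ₀ ∈ (−1,1)`), `ρ̂_i ∈ (−1,1)`, weights `s_i`,
`A = (1/n) Σ s_i √(1+ρ̂_i) > 0`, `D = (1/n) Σ s_i √(1−ρ̂_i) > 0`, and
`G = (1/n) Σ s_i T_{S⁰}^{Σ(ρ̂_i)}`, one has
`G S⁰ G = ((A²+D²)/2) Σ(ρ*)` with `ρ* = (A²−D²)/(A²+D²)`; consequently, normalizing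
`Σ¹ = G S⁰ G` by its (constant, positive) diagonal gives
`D(Σ¹)^{−1/2} Σ¹ D(Σ¹)^{−1/2} = Σ(ρ*)`. -/
theorem one_step_riemannian_gd_bivariate
    (n : ℕ) (hn : 1 ≤ n) (s : Fin n → ℝ)
    (ρ0 : ℝ) (hρ0 : ρ0 ∈ Set.Ioo (-1 : ℝ) 1)
    (ρh : Fin n → ℝ) (hρh : ∀ i, ρh i ∈ Set.Ioo (-1 : ℝ) 1)
    (A D : ℝ)
    (hA : A = (1 / (n : ℝ)) * ∑ i, s i * Real.sqrt (1 + ρh i))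
    (hD : D = (1 / (n : ℝ)) * ∑ i, s i * Real.sqrt (1 - ρh i))
    (hApos : 0 < A) (hDpos : 0 < D)
    (G : Matrix (Fin 2) (Fin 2) ℝ)
    (hG : G = (1 / (n : ℝ)) • ∑ i, s i • otMap (corr2 ρ0) (corr2 (ρh i))) :
    G * corr2 ρ0 * G =
        ((A ^ 2 + D ^ 2) / 2) • corr2 ((A ^ 2 - D ^ 2) / (A ^ 2 + D ^ 2)) ∧
      symNormalize (G * corr2 ρ0 * G) = corr2 ((A ^ 2 - D ^ 2) / (A ^ 2 + D ^ 2)) := by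
  obtain ⟨h0l, h0r⟩ := hρ0
  have hp0 : (0:ℝ) < 1 + ρ0 := by linarith
  have hq0 : (0:ℝ) < 1 - ρ0 := by linarith
  have hsp0 : (0:ℝ) < Real.sqrt (1+ρ0) := Real.sqrt_pos.mpr hp0
  have hsq0 : (0:ℝ) < Real.sqrt (1-ρ0) := Real.sqrt_pos.mpr hq0
  -- compute G
  have hGE : G = eigMat (A / Real.sqrt (1+ρ0)) (D / Real.sqrt (1-ρ0)) := by
    rw [hG]
    have : ∀ i : Fin n, otMap (corr2 ρ0) (corr2 (ρh i))
        = eigMat (Real.sqrt (1+ρh i) / Real.sqrt (1+ρ0))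
            (Real.sqrt (1-ρh i) / Real.sqrt (1-ρ0)) :=
      fun i => otMap_corr2 ⟨h0l, h0r⟩ (hρh i)
    have e : ∀ a : ℝ, ∀ x : Fin n → ℝ,
        (1/(n:ℝ)) * ∑ i, s i * (x i / a) = ((1/(n:ℝ)) * ∑ i, s i * x i) / a := by
      intro a x
      rw [mul_div_assoc, Finset.sum_div]
      exact congrArg _ (Finset.sum_congr rfl fun i _ => (mul_div_assoc _ _ _).symm)
    simp_rw [this]
    rw [eigMat_sum, eigMat_smul, hA, hD, e, e]
  have key : G * corr2 ρ0 * G = eigMat (A^2) (D^2) := by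
    rw [hGE, corr2_eq, eigMat_mul, eigMat_mul]
    have e1 : A/Real.sqrt (1+ρ0) * (1+ρ0) * (A/Real.sqrt (1+ρ0))
        = A^2 * ((1+ρ0)/(Real.sqrt (1+ρ0)*Real.sqrt (1+ρ0))) := by ring
    have e2 : D/Real.sqrt (1-ρ0) * (1-ρ0) * (D/Real.sqrt (1-ρ0))
        = D^2 * ((1-ρ0)/(Real.sqrt (1-ρ0)*Real.sqrt (1-ρ0))) := by ring
    rw [e1, e2, Real.mul_self_sqrt hp0.le, Real.mul_self_sqrt hq0.le,
      div_self hp0.ne', div_self hq0.ne', mul_one, mul_one]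
  have hAD : (0:ℝ) < A^2 + D^2 := by positivity
  constructor
  · have h1 : (A^2+D^2)/2 * (1 + (A^2-D^2)/(A^2+D^2)) = A^2 := by
      field_simp; ring
    have h2 : (A^2+D^2)/2 * (1 - (A^2-D^2)/(A^2+D^2)) = D^2 := by
      field_simp; ring
    rw [key, corr2_eq, eigMat_smul, h1, h2]
  · rw [key, symNormalize_eigMat hAD]
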